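/- Let X be a geodesic Peano continuum that is semi-locally simply connected, and (X̃, d) its path space with the length-infimum metric. For any [α] ∈ X̃ and any path β in X starting at α(1), the canonical lift t ↦ [α ∗ (β|_{[0,t]})] of a geodesic β in X is a geodesic in X̃. -/

import Mathlib

open Metric Set ENNReal NNReal

noncomputable section

/-- Arc length of a path in a pseudo-metric space, valued in `ℝ≥0∞`. -/
def pathLen {X : Type*} [PseudoMetricSpace X] {x y : X} (γ : Path x y) : ℝ≥0∞ :=
  eVariationOn γ Set.univ

/-- A metric space is geodesic if any two points are joined by a path whose
length equals their distance. -/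
def IsGeodesicSpace (X : Type*) [MetricSpace X] : Prop :=
  ∀ x y : X, ∃ γ : Path x y, pathLen γ = ENNReal.ofReal (dist x y)

/-- Semi-local simple connectedness: every point has a neighborhood `U` such
that every loop contained in `U` is null-homotopic in `X`. -/
def SemiLocallySimplyConnected (X : Type*) [TopologicalSpace X] : Prop :=
  ∀ x : X, ∃ U ∈ nhds x, ∀ γ : Path x x, Set.range γ ⊆ U → γ.Homotopic (Path.refl x)

/-- A group is finitely presented. -/
def Group.FinitelyPresented (G : Type*) [Group G] : Prop :=
  ∃ (n : ℕ) (rels : Set (FreeGroup (Fin n))), rels.Finite ∧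
    Nonempty (PresentedGroup rels ≃* G)

/-- The space of homotopy-rel-endpoints classes of paths starting at `x₀`. -/
@[reducible] def PathsFrom {X : Type*} [TopologicalSpace X] (x₀ : X) : Type _ :=
  Σ y : X, Path.Homotopic.Quotient x₀ y

/-- The length-infimum distance on `PathsFrom x₀`, valued in `ℝ≥0∞`:
the infimum of lengths of paths `γ` from `α(1)` to `β(1)` such that
`α ∗ γ` is homotopic rel endpoints to `β`. -/
def dTilde {X : Type*} [MetricSpace X] {x₀ : X} (a b : PathsFrom x₀) : ℝ≥0∞ :=
  ⨅ γ : {γ : Path a.1 b.1 // Path.Homotopic.Quotient.trans a.2 (Path.Homotopic.Quotient.mk γ) = b.2}, pathLen γ.1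

/-- The endpoint projection `X̃ → X`. -/
def endpointProj {X : Type*} [TopologicalSpace X] {x₀ : X} (a : PathsFrom x₀) : X := a.1

/-- The action of a class of a loop `β` at `x₀` on `PathsFrom x₀`, sending `[α]` to `[β ∗ α]`. -/
def loopAct {X : Type*} [TopologicalSpace X] {x₀ : X}
    (g : Path.Homotopic.Quotient x₀ x₀) (a : PathsFrom x₀) : PathsFrom x₀ :=
  ⟨a.1, Path.Homotopic.Quotient.trans g a.2⟩

/-- Uniform path connectedness. -/
def UniformlyPathConnected (X : Type*) [MetricSpace X] : Prop :=
  ∃ α : ℝ → ℝ, ∀ x y : X, x ≠ y →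
    ∃ γ : Path x y, Metric.diam (Set.range γ) ≤ α (dist x y)

/-- `π₁(X, x₀)` is uniformly generated: for some `R > 0` it is generated by
classes of loops of diameter at most `R`, conjugated to the basepoint by arbitrary paths. -/
def UniformlyGeneratedPi1 (X : Type*) [MetricSpace X] (x₀ : X) : Prop :=
  ∃ R : ℝ, 0 < R ∧ Subgroup.closure
    {g : FundamentalGroup X x₀ | ∃ (y : X) (p : Path x₀ y) (γ : Path y y),
      Metric.diam (Set.range γ) ≤ R ∧
      g = FundamentalGroup.fromPath (X := TopCat.of X) ⟦(p.trans γ).trans p.symm⟧} = ⊤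

/-- A list of points of `X` is an `r`-chain: consecutive points are at distance at most `r`. -/
def IsChain' {X : Type*} [MetricSpace X] (r : ℝ) : List X → Prop :=
  List.Chain' (fun x y => dist x y ≤ r)

/-- An elementary move at scale `R` between based chains: insertion of one interior
point, with both chains being `R`-chains. -/
def ChainMove {X : Type*} [MetricSpace X] (R : ℝ) (l₁ l₂ : List X) : Prop :=
  ∃ (p q : List X) (x : X), p ≠ [] ∧ q ≠ [] ∧
    l₁ = p ++ q ∧ l₂ = p ++ x :: q ∧ IsChain' R l₁ ∧ IsChain' R l₂

/-- A based `r`-loop is `R`-null-homotopic: it can be reduced to the trivial loop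
by elementary moves at scale `R`. -/
def ChainNull {X : Type*} [MetricSpace X] (R : ℝ) (x₀ : X) (l : List X) : Prop :=
  Relation.ReflTransGen (fun a b => ChainMove R a b ∨ ChainMove R b a) l [x₀, x₀]

/-- Coarse 1-connectedness of a metric space, via chains (edge-paths in Rips
complexes): `X` is `t`-chain connected for some `t > 0`, and every `r`-loop can
be filled at some uniformly larger scale `R`. -/
def CoarselySimplyConnected (X : Type*) [MetricSpace X] : Prop :=
  (∃ t : ℝ, 0 < t ∧ ∀ x y : X, ∃ l : List X, IsChain' t l ∧
      l.head? = some x ∧ l.getLast? = some y) ∧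
  ∀ r : ℝ, 0 < r → ∃ R : ℝ, r ≤ R ∧ ∀ (x₀ : X) (l : List X),
    IsChain' r l → l.head? = some x₀ → l.getLast? = some x₀ → ChainNull R x₀ l

end

/-! For `s ≤ t`, the segment `β|[s,t]` joins the lifts at `s` and `t`, so their distance in `X̃`
is at most the length of `β|[s,t]`, which for a geodesic is `d(β s, β t)`. Hence the lift is
continuous and no longer than `β`, i.e. than `d(α(1), z)`; and this is at most the distance in
`X̃` between its endpoints, since `d̃` dominates the distance of the projections. -/

open unitInterval

section Variation

variable {α E F : Type*} [LinearOrder α] [PseudoEMetricSpace E] [PseudoEMetricSpace F]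

theorem eVariationOn_le_of_edist_le {f : α → E} {g : α → F} {s : Set α}
    (h : ∀ x ∈ s, ∀ y ∈ s, edist (f x) (f y) ≤ edist (g x) (g y)) :
    eVariationOn f s ≤ eVariationOn g s :=
  iSup_le fun p => le_iSup_of_le p <|
    Finset.sum_le_sum fun _ _ => h _ (p.2.2.2 _) _ (p.2.2.2 _)

theorem eVariationOn_Icc_eq_edist_of_le {f : α → E} {a b s t : α} (has : a ≤ s) (hst : s ≤ t)
    (htb : t ≤ b) (hf : eVariationOn f (Icc a b) = edist (f a) (f b))
    (hfin : edist (f a) (f b) ≠ ∞) :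
    eVariationOn f (Icc s t) = edist (f s) (f t) := by
  have split : eVariationOn f (Icc a s) + eVariationOn f (Icc s t) + eVariationOn f (Icc t b)
      = edist (f a) (f b) := by
    have h₁ := eVariationOn.Icc_add_Icc f (s := univ) has hst (mem_univ s)
    have h₂ := eVariationOn.Icc_add_Icc f (s := univ) (has.trans hst) htb (mem_univ t)
    simp only [univ_inter] at h₁ h₂
    rw [h₁, h₂, hf]
  have hV₁ := eVariationOn.edist_le f (left_mem_Icc.2 has) (right_mem_Icc.2 has)
  have hV₃ := eVariationOn.edist_le f (left_mem_Icc.2 htb) (right_mem_Icc.2 htb)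
  have hfin₁ : edist (f a) (f s) ≠ ∞ :=
    ne_top_of_le_ne_top hfin (hV₁.trans (le_self_add.trans (le_self_add.trans split.le)))
  have hfin₃ : edist (f t) (f b) ≠ ∞ :=
    ne_top_of_le_ne_top hfin (hV₃.trans (le_add_self.trans split.le))
  refine le_antisymm ?_ (eVariationOn.edist_le f (left_mem_Icc.2 hst) (right_mem_Icc.2 hst))
  have key : edist (f a) (f s) + eVariationOn f (Icc s t) + edist (f t) (f b)
      ≤ edist (f a) (f s) + edist (f s) (f t) + edist (f t) (f b) :=
    calc _ ≤ eVariationOn f (Icc a s) + eVariationOn f (Icc s t) + eVariationOn f (Icc t b) := by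
          gcongr
      _ = edist (f a) (f b) := split
      _ ≤ _ := edist_triangle4 _ _ _ _
  exact (ENNReal.add_le_add_iff_left hfin₁).1 ((ENNReal.add_le_add_iff_right hfin₃).1 key)

end Variation

theorem continuous_of_edist_le {α E F : Type*} [TopologicalSpace α] [PseudoEMetricSpace E]
    [PseudoEMetricSpace F] {f : α → E} {g : α → F} (hg : Continuous g)
    (h : ∀ x y, edist (f x) (f y) ≤ edist (g x) (g y)) : Continuous f :=
  EMetric.continuous_iff'.2 fun a ε hε =>
    (EMetric.continuous_iff'.1 hg a ε hε).mono fun x hx => (h x a).trans_lt hx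

namespace Path

variable {X : Type*}

section Length

variable [PseudoMetricSpace X] {x y : X}

theorem edist_le_pathLen (γ : Path x y) : edist x y ≤ pathLen γ := by
  simpa [pathLen] using eVariationOn.edist_le γ (mem_univ 0) (mem_univ 1)

theorem pathLen_truncate_le (γ : Path x y) {s t : I} (hst : s ≤ t) :
    pathLen (γ.truncate s t) ≤ eVariationOn γ (Icc s t) := by
  refine eVariationOn.comp_le_of_monotoneOn γ
    (fun u : I => projIcc 0 1 zero_le_one (min (max (u : ℝ) s) t)) ?_ ?_
  · exact fun u _ v _ huv => monotone_projIcc zero_le_one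
      (min_le_min_right _ (max_le_max_right _ (Subtype.coe_le_coe.2 huv)))
  · intro u _
    have hmem : min (max (u : ℝ) s) t ∈ Icc (0 : ℝ) 1 :=
      ⟨le_min (s.2.1.trans (le_max_right _ _)) t.2.1, min_le_of_right_le t.2.2⟩
    dsimp only
    rw [projIcc_of_mem zero_le_one hmem]
    exact ⟨Subtype.coe_le_coe.1 (le_min (le_max_right _ _) hst),
      Subtype.coe_le_coe.1 (min_le_right _ _)⟩

theorem eVariationOn_Icc_eq_edist_of_pathLen_eq (γ : Path x y)
    (hγ : pathLen γ = ENNReal.ofReal (dist x y)) {s t : I} (hst : s ≤ t) :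
    eVariationOn γ (Icc s t) = edist (γ s) (γ t) := by
  have hIcc : Icc (0 : I) 1 = univ := eq_univ_of_forall fun u => ⟨u.2.1, u.2.2⟩
  refine eVariationOn_Icc_eq_edist_of_le (a := 0) (b := 1) s.2.1 hst t.2.2 ?_ ?_
  · rw [hIcc, γ.source, γ.target, edist_dist]
    exact hγ
  · simp [edist_ne_top]

end Length

/-- Straight-line homotopy between the parametrizations. -/
theorem homotopic_of_eq_extend_comp [TopologicalSpace X] {x y a b : X} (γ : Path x y)
    {f g : I → ℝ} (hf : Continuous f) (hg : Continuous g) (p q : Path a b)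
    (hp : ∀ i, p i = γ.extend (f i)) (hq : ∀ i, q i = γ.extend (g i))
    (h₀ : f 0 = g 0) (h₁ : f 1 = g 1) : p.Homotopic q := by
  refine ⟨⟨⟨⟨fun ui => γ.extend ((1 - (ui.1 : ℝ)) * f ui.2 + (ui.1 : ℝ) * g ui.2), ?_⟩,
    ?_, ?_⟩, ?_⟩⟩
  · exact γ.continuous_extend.comp (by fun_prop)
  · intro i; simp [hp i]
  · intro i; simp [hq i]
  · rintro t i (rfl | rfl)
    · show γ.extend _ = p 0
      rw [hp 0, h₀]; congr 1; ring
    · show γ.extend _ = p 1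
      rw [hp 1, h₁]; congr 1; ring

theorem truncate_trans_truncateOfLE_homotopic [TopologicalSpace X] {x y : X} (γ : Path x y)
    {s t : I} (hst : s ≤ t) :
    (((γ.truncate 0 s).cast (by rw [min_eq_left s.2.1, extend_zero]) rfl).trans
      (γ.truncateOfLE hst)).Homotopic
      ((γ.truncate 0 t).cast (by rw [min_eq_left t.2.1, extend_zero]) rfl) := by
  have hst' : (s : ℝ) ≤ t := hst
  refine homotopic_of_eq_extend_comp γ
    (f := fun i => if (i : ℝ) ≤ 1 / 2 then min (max (2 * i) 0) s else min (max (2 * i - 1) s) t)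
    (g := fun i => min (max (i : ℝ) 0) t) ?_ (by fun_prop) _ _ ?_ (fun _ => rfl) ?_ ?_
  · refine Continuous.if_le (by fun_prop) (by fun_prop) (by fun_prop) continuous_const ?_
    intro i hi
    norm_num [hi, min_eq_right s.2.2, max_eq_right s.2.1, min_eq_left hst']
  · intro i
    rw [Path.trans_apply]
    split_ifs <;> rfl
  · norm_num [min_eq_left s.2.1, min_eq_left t.2.1]
  · norm_num [max_eq_left s.2.2]

end Path

namespace PathsFrom

open Path

variable {X : Type*}

section Topology

variable [TopologicalSpace X] {x₀ : X}

theorem mk_trans_congr {x y y' : X} (q : Homotopic.Quotient x₀ x) {p : Path x y}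
    {p' : Path x y'} (h : ∀ t, p t = p' t) :
    (⟨y, q.trans (Homotopic.Quotient.mk p)⟩ : PathsFrom x₀) =
      ⟨y', q.trans (Homotopic.Quotient.mk p')⟩ := by
  obtain rfl : y = y' := by simpa using h 1
  obtain rfl : p = p' := Path.ext (funext h)
  rfl

/-- `t ↦ [α ∗ β|[0,t]]`, for `a = [α]`. -/
noncomputable def canonicalLift (a : PathsFrom x₀) {z : X} (β : Path a.1 z) (t : I) :
    PathsFrom x₀ :=
  ⟨β.extend t, Homotopic.Quotient.trans a.2 (Homotopic.Quotient.mk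
    ((β.truncate 0 t).cast (by rw [min_eq_left t.2.1, Path.extend_zero]) rfl))⟩

variable (a : PathsFrom x₀) {z : X} (β : Path a.1 z)

theorem canonicalLift_zero : canonicalLift a β 0 = a := by
  refine (mk_trans_congr a.2 (p' := Path.refl a.1) fun u => ?_).trans ?_
  · simp [Path.truncate]
  · rw [Homotopic.Quotient.mk_refl, Homotopic.Quotient.trans_refl]

theorem canonicalLift_one :
    canonicalLift a β 1 = ⟨z, Homotopic.Quotient.trans a.2 (Homotopic.Quotient.mk β)⟩ :=
  mk_trans_congr a.2 fun u => by simp [Path.truncate, u.2.1, u.2.2]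

theorem canonicalLift_trans_truncateOfLE {s t : I} (hst : s ≤ t) :
    Homotopic.Quotient.trans (canonicalLift a β s).2 (Homotopic.Quotient.mk (β.truncateOfLE hst))
      = (canonicalLift a β t).2 := by
  dsimp only [canonicalLift]
  rw [Homotopic.Quotient.trans_assoc, ← Homotopic.Quotient.mk_trans,
    Homotopic.Quotient.eq.2 (β.truncate_trans_truncateOfLE_homotopic hst)]

end Topology

variable [MetricSpace X] {x₀ : X}

theorem edist_le_dTilde (a b : PathsFrom x₀) : edist a.1 b.1 ≤ dTilde a b :=
  le_iInf fun γ => γ.1.edist_le_pathLen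

theorem dTilde_le_pathLen {a b : PathsFrom x₀} (γ : Path a.1 b.1)
    (hγ : Homotopic.Quotient.trans a.2 (Homotopic.Quotient.mk γ) = b.2) :
    dTilde a b ≤ pathLen γ :=
  iInf_le_of_le ⟨γ, hγ⟩ le_rfl

variable (a : PathsFrom x₀) {z : X} (β : Path a.1 z)

theorem dTilde_canonicalLift_le {s t : I} (hst : s ≤ t) :
    dTilde (canonicalLift a β s) (canonicalLift a β t) ≤ eVariationOn β (Icc s t) :=
  calc dTilde (canonicalLift a β s) (canonicalLift a β t)
      ≤ pathLen (β.truncateOfLE hst) :=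
        dTilde_le_pathLen _ (canonicalLift_trans_truncateOfLE a β hst)
    _ ≤ eVariationOn β (Icc s t) := β.pathLen_truncate_le hst

theorem edist_canonicalLift_le [MetricSpace (PathsFrom x₀)]
    (hm : ∀ a b : PathsFrom x₀, ENNReal.ofReal (dist a b) = dTilde a b)
    (hβ : pathLen β = ENNReal.ofReal (dist a.1 z)) (s t : I) :
    edist (canonicalLift a β s) (canonicalLift a β t) ≤ edist (β s) (β t) := by
  wlog hst : s ≤ t generalizing s t
  · rw [edist_comm, edist_comm (β s)]
    exact this t s (le_of_not_ge hst)
  rw [edist_dist, hm, ← β.eVariationOn_Icc_eq_edist_of_pathLen_eq hβ hst]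
  exact dTilde_canonicalLift_le a β hst

end PathsFrom

/-- the canonical lift of a geodesic in `X` is a geodesic in `X̃`. -/
theorem stmt7 {X : Type*} [MetricSpace X] (x₀ : X)
    (m : MetricSpace (PathsFrom x₀))
    (hm : ∀ a b : PathsFrom x₀,
      ENNReal.ofReal (letI := m; dist a b) = dTilde a b)
    (a : PathsFrom x₀) (z : X) (β : Path a.1 z)
    (hβ : pathLen β = ENNReal.ofReal (dist a.1 z)) :
    letI := m
    ∃ L : Path a (⟨z, Path.Homotopic.Quotient.trans a.2 (Path.Homotopic.Quotient.mk β)⟩ : PathsFrom x₀),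
      (∀ t : unitInterval, L t =
        ⟨β.extend t, Path.Homotopic.Quotient.trans a.2
          (Path.Homotopic.Quotient.mk ((β.truncate 0 t).cast (by rw [min_eq_left t.2.1, Path.extend_zero]) rfl))⟩) ∧
      pathLen L = ENNReal.ofReal (dist a (⟨z, Path.Homotopic.Quotient.trans a.2 (Path.Homotopic.Quotient.mk β)⟩ : PathsFrom x₀)) := by
  let _ := m
  have hlift := PathsFrom.edist_canonicalLift_le a β hm hβ
  let L : Path a ⟨z, Path.Homotopic.Quotient.trans a.2 (Path.Homotopic.Quotient.mk β)⟩ :=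
    ⟨⟨PathsFrom.canonicalLift a β, continuous_of_edist_le β.continuous hlift⟩,
      PathsFrom.canonicalLift_zero a β, PathsFrom.canonicalLift_one a β⟩
  refine ⟨L, fun t => rfl, le_antisymm ?_ ?_⟩
  · calc pathLen L ≤ pathLen β := eVariationOn_le_of_edist_le fun s _ t _ => hlift s t
      _ = edist a.1 z := by rw [hβ, edist_dist]
      _ ≤ dTilde a _ := PathsFrom.edist_le_dTilde _ _
      _ = _ := (hm _ _).symm
  · rw [← edist_dist]
    exact L.edist_le_pathLen
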